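/- Let (T,d,ρ,u) be a plane ℝ-tree. For all α, β, γ ∈ T×[0,1]: if β → γ and β ↷ α, then γ ↷ α. -/
import Mathlib


open Set MeasureTheory Filter Metric

/-- The metric segment `[[x,y]]` between `x` and `y`. -/
def geoSeg {T : Type*} [MetricSpace T] (x y : T) : Set T :=
  {z | dist x z + dist z y = dist x y}

/-- `(T,d)` is an `ℝ`-tree: it is geodesic (any two points are joined by a geodesic
segment, which is `geoSeg x y`) and loopless (this segment is the unique arc joining
`x` and `y`). -/
structure IsRTree (T : Type*) [MetricSpace T] : Prop where
  geodesic : ∀ x y : T, ∃ γ : ℝ → T, γ 0 = x ∧ γ (dist x y) = y ∧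
    (∀ s ∈ Icc (0:ℝ) (dist x y), ∀ t ∈ Icc (0:ℝ) (dist x y),
      dist (γ s) (γ t) = |s - t|) ∧
    γ '' Icc (0:ℝ) (dist x y) = geoSeg x y
  loopless : ∀ x y : T, ∀ f : ℝ → T, ContinuousOn f (Icc (0:ℝ) 1) →
    InjOn f (Icc (0:ℝ) 1) → f 0 = x → f 1 = y → f '' Icc (0:ℝ) 1 = geoSeg x y

/-- The set of connected components of `T \ {x}`. -/
def comps {T : Type*} [MetricSpace T] (x : T) : Set (Set T) :=
  {C | ∃ y, y ≠ x ∧ C = connectedComponentIn ({x}ᶜ) y}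

/-- A plane `ℝ`-tree structure on the metric space `T`: `T` is a separable complete
`ℝ`-tree with a root and a balanced angle function `u`.  `cca x y` is the closest
common ancestor of `x` and `y`. -/
structure PlaneRTree (T : Type*) [MetricSpace T] where
  sep : TopologicalSpace.SeparableSpace T
  cpl : CompleteSpace T
  tree : IsRTree T
  root : T
  cca : T → T → T
  cca_mem : ∀ x y : T, cca x y ∈ geoSeg root x ∩ geoSeg root y
  cca_max : ∀ x y : T, ∀ z ∈ geoSeg root x ∩ geoSeg root y,
    dist root z ≤ dist root (cca x y)
  u : T → T → ℝ
  u_mem : ∀ x y : T, u x y ∈ Icc (0:ℝ) 1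
  u_root : ∀ x : T, u x root = 0
  u_self : ∀ x : T, u x x = 0
  u_eq_iff : ∀ x y z : T, y ≠ x → z ≠ x →
    (u x y = u x z ↔ connectedComponentIn ({x}ᶜ) y = connectedComponentIn ({x}ᶜ) z)
  balanced : ∀ x y : T, (comps x).ncard = 2 → u x y = 0 ∨ u x y = 1/2

namespace PlaneRTree

variable {T : Type*} [MetricSpace T]

open Classical in
/-- The angle `u(x, (y,w))`: it is `u x y` if `x ≠ y`, and `w` if `x = y`. -/
noncomputable def ang (P : PlaneRTree T) (x : T) (β : T × ℝ) : ℝ :=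
  if x = β.1 then β.2 else P.u x β.1

/-- `α ↷ β` : `α` is at the left of `β`. -/
def leftOf (P : PlaneRTree T) (α β : T × ℝ) : Prop :=
  P.ang (P.cca α.1 β.1) α < P.ang (P.cca α.1 β.1) β

/-- `α → β` : `β` is in front of `α`. -/
def frontOf (P : PlaneRTree T) (α β : T × ℝ) : Prop :=
  α.1 ∈ geoSeg P.root β.1 ∧ P.ang α.1 β = α.2

/-- The contour relation `≺` : `α ≺ β` iff `α ↷ β` or `α → β`. -/
def precOf (P : PlaneRTree T) (α β : T × ℝ) : Prop :=
  P.leftOf α β ∨ P.frontOf α β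

end PlaneRTree


section Aux

variable {T : Type*} [MetricSpace T]

lemma mem_geoSeg_left (x y : T) : x ∈ geoSeg x y := by
  simp [geoSeg]

lemma mem_geoSeg_right (x y : T) : y ∈ geoSeg x y := by
  simp [geoSeg]

lemma dist_le_of_mem_geoSeg {x y z : T} (hz : z ∈ geoSeg x y) : dist x z ≤ dist x y := by
  simp only [geoSeg, Set.mem_setOf_eq] at hz
  have := dist_nonneg (x := z) (y := y)
  linarith

lemma geoSeg_trans {x y z w : T} (hz : z ∈ geoSeg x y) (hw : w ∈ geoSeg x z) :
    w ∈ geoSeg x y := by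
  simp only [geoSeg, Set.mem_setOf_eq] at *
  have h1 := dist_triangle x w y
  have h2 := dist_triangle w z y
  linarith

lemma dist_root_le_of_mem_geoSeg {p b c w : T} (hb : b ∈ geoSeg p c)
    (hw : w ∈ geoSeg b c) : dist p b ≤ dist p w := by
  simp only [geoSeg, Set.mem_setOf_eq] at hb hw
  have h1 := dist_triangle p w c
  have h2 := dist_nonneg (x := b) (y := w)
  linarith

lemma IsRTree.geoSeg_cmp {x y z w : T} (h : IsRTree T) (hz : z ∈ geoSeg x y)
    (hw : w ∈ geoSeg x y) (hd : dist x z ≤ dist x w) : z ∈ geoSeg x w := by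
  obtain ⟨g, hg0, hgD, hiso, himg⟩ := h.geodesic x y
  rw [← himg] at hz hw
  obtain ⟨s, hs, rfl⟩ := hz
  obtain ⟨t, ht, rfl⟩ := hw
  have h0 : (0:ℝ) ∈ Icc (0:ℝ) (dist x y) := ⟨le_refl _, dist_nonneg⟩
  have hsx : dist x (g s) = s := by
    rw [← hg0, hiso 0 h0 s hs]
    simp [abs_of_nonneg hs.1]
  have htx : dist x (g t) = t := by
    rw [← hg0, hiso 0 h0 t ht]
    simp [abs_of_nonneg ht.1]
  rw [hsx, htx] at hd
  have hst : dist (g s) (g t) = t - s := by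
    rw [hiso s hs t ht, abs_of_nonpos (by linarith)]
    ring
  simp only [geoSeg, Set.mem_setOf_eq]
  rw [hsx, htx, hst]
  ring

lemma IsRTree.geoSeg_eq {x y z w : T} (h : IsRTree T) (hz : z ∈ geoSeg x y)
    (hw : w ∈ geoSeg x y) (hd : dist x z = dist x w) : z = w := by
  have h1 : z ∈ geoSeg x w := h.geoSeg_cmp hz hw hd.le
  simp only [geoSeg, Set.mem_setOf_eq] at h1
  rw [hd] at h1
  have : dist z w = 0 := by linarith
  exact dist_eq_zero.1 this

lemma IsRTree.isPreconnected_geoSeg (h : IsRTree T) (x y : T) :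
    IsPreconnected (geoSeg x y) := by
  obtain ⟨g, hg0, hgD, hiso, himg⟩ := h.geodesic x y
  rw [← himg]
  apply isPreconnected_Icc.image
  apply LipschitzOnWith.continuousOn (K := 1)
  intro s hs t ht
  have hd : dist (g s) (g t) = dist s t := by
    rw [hiso s hs t ht, Real.dist_eq]
  rw [edist_dist, edist_dist, hd]
  simp

lemma ang_eq_u (P : PlaneRTree T) {x : T} {b : T × ℝ} (h : x ≠ b.1) :
    P.ang x b = P.u x b.1 := by
  unfold PlaneRTree.ang
  exact if_neg h

lemma ang_eq_snd (P : PlaneRTree T) {x : T} {b : T × ℝ} (h : x = b.1) :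
    P.ang x b = b.2 := by
  unfold PlaneRTree.ang
  exact if_pos h

lemma comp_eq_of_preconnected {b c a : T} {S : Set T} (hS : IsPreconnected S)
    (hSb : S ⊆ ({b}ᶜ : Set T)) (hc : c ∈ S) (ha : a ∈ S) :
    connectedComponentIn ({b}ᶜ : Set T) c = connectedComponentIn ({b}ᶜ : Set T) a :=
  connectedComponentIn_eq (hS.subset_connectedComponentIn hc hSb ha)

end Aux

/-- For all `α, β, γ ∈ T × [0,1]`: if `β → γ` and `β ↷ α`, then `γ ↷ α`. -/
theorem frontOf_leftOf_symm {T : Type*} [MetricSpace T] (P : PlaneRTree T)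
    (α β γ : T × ℝ) (hα : α.2 ∈ Icc (0:ℝ) 1) (hβ : β.2 ∈ Icc (0:ℝ) 1)
    (hγ : γ.2 ∈ Icc (0:ℝ) 1) (h1 : P.frontOf β γ) (h2 : P.leftOf β α) :
    P.leftOf γ α := by
  classical
  obtain ⟨hbc, hang⟩ := h1
  have h2' : P.ang (P.cca β.1 α.1) β < P.ang (P.cca β.1 α.1) α := h2
  show P.ang (P.cca γ.1 α.1) γ < P.ang (P.cca γ.1 α.1) α
  obtain ⟨hmb, hma⟩ := P.cca_mem β.1 α.1
  obtain ⟨hnc, hna⟩ := P.cca_mem γ.1 α.1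
  set ρ := P.root with hρ_def
  set a := α.1 with ha_def
  set b := β.1 with hb_def
  set c := γ.1 with hc_def
  set m := P.cca b a with hm_def
  set n := P.cca c a with hn_def
  have hmc : m ∈ geoSeg ρ c := geoSeg_trans hbc hmb
  have hmn : dist ρ m ≤ dist ρ n := P.cca_max c a m ⟨hmc, hma⟩
  by_cases hcmp : dist ρ n ≤ dist ρ b
  · -- Case 1 : n = m
    have hnb : n ∈ geoSeg ρ b := P.tree.geoSeg_cmp hnc hbc hcmp
    have hnm : dist ρ n ≤ dist ρ m := P.cca_max b a n ⟨hnb, hna⟩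
    have hmn_eq : m = n := P.tree.geoSeg_eq hmc hnc (le_antisymm hmn hnm)
    rw [← hmn_eq]
    by_cases hmb' : m = b
    · have h3 : P.ang m γ = β.2 := by rw [hmb']; exact hang
      have h4 : P.ang m β = β.2 := ang_eq_snd P (hmb'.trans hb_def)
      rw [h4] at h2'
      rw [h3]
      exact h2'
    · have hmltb : dist ρ m < dist ρ b := by
        rcases lt_or_eq_of_le (dist_le_of_mem_geoSeg hmb) with h | h
        · exact h
        · exact absurd (P.tree.geoSeg_eq hmb (mem_geoSeg_right ρ b) h) hmb'
      have hmc' : m ≠ c := by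
        intro h
        have hblec : dist ρ b ≤ dist ρ c := dist_le_of_mem_geoSeg hbc
        rw [h] at hmltb
        linarith
      have hS : (geoSeg b c) ⊆ ({m}ᶜ : Set T) := by
        intro w hw
        have hd := dist_root_le_of_mem_geoSeg hbc hw
        simp only [Set.mem_compl_iff, Set.mem_singleton_iff]
        intro h
        rw [h] at hd
        linarith
      have hcomp := comp_eq_of_preconnected (P.tree.isPreconnected_geoSeg b c) hS
        (mem_geoSeg_left b c) (mem_geoSeg_right b c)
      have hu : P.u m b = P.u m c :=
        (P.u_eq_iff m b c (Ne.symm hmb') (Ne.symm hmc')).2 hcomp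
      have h3 : P.ang m γ = P.u m c := by
        rw [ang_eq_u P (x := m) (b := γ) (by rw [← hc_def]; exact hmc'), ← hc_def]
      have h4 : P.ang m β = P.u m b := by
        rw [ang_eq_u P (x := m) (b := β) (by rw [← hb_def]; exact hmb'), ← hb_def]
      rw [h4] at h2'
      rw [h3, ← hu]
      exact h2'
  · -- Case 2 : contradiction
    exfalso
    push_neg at hcmp
    have hbn : b ∈ geoSeg ρ n := P.tree.geoSeg_cmp hbc hnc hcmp.le
    have hba : b ∈ geoSeg ρ a := geoSeg_trans hna hbn
    have hble : dist ρ b ≤ dist ρ m := P.cca_max b a b ⟨mem_geoSeg_right ρ b, hba⟩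
    have hmeq : m = b :=
      P.tree.geoSeg_eq hmb (mem_geoSeg_right ρ b)
        (le_antisymm (dist_le_of_mem_geoSeg hmb) hble)
    have hbc' : b ≠ c := by
      intro h
      have ht : dist ρ b < dist ρ c := lt_of_lt_of_le hcmp (dist_le_of_mem_geoSeg hnc)
      rw [h] at ht
      exact lt_irrefl _ ht
    have hba' : b ≠ a := by
      intro h
      have ht : dist ρ b < dist ρ a := lt_of_lt_of_le hcmp (dist_le_of_mem_geoSeg hna)
      rw [h] at ht
      exact lt_irrefl _ ht
    have hSc : (geoSeg n c) ⊆ ({b}ᶜ : Set T) := by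
      intro w hw
      have hd := dist_root_le_of_mem_geoSeg hnc hw
      simp only [Set.mem_compl_iff, Set.mem_singleton_iff]
      intro h
      rw [h] at hd
      linarith
    have hSa : (geoSeg n a) ⊆ ({b}ᶜ : Set T) := by
      intro w hw
      have hd := dist_root_le_of_mem_geoSeg hna hw
      simp only [Set.mem_compl_iff, Set.mem_singleton_iff]
      intro h
      rw [h] at hd
      linarith
    have hU : IsPreconnected (geoSeg n c ∪ geoSeg n a) :=
      IsPreconnected.union n (mem_geoSeg_left n c) (mem_geoSeg_left n a)
        (P.tree.isPreconnected_geoSeg n c) (P.tree.isPreconnected_geoSeg n a)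
    have hcomp := comp_eq_of_preconnected hU (Set.union_subset hSc hSa)
      (Set.mem_union_left _ (mem_geoSeg_right n c))
      (Set.mem_union_right _ (mem_geoSeg_right n a))
    have hu : P.u b c = P.u b a :=
      (P.u_eq_iff b c a (Ne.symm hbc') (Ne.symm hba')).2 hcomp
    have h3 : P.u b c = β.2 := by
      rw [ang_eq_u P (x := b) (b := γ) (by rw [← hc_def]; exact hbc'), ← hc_def] at hang
      exact hang
    have h4 : P.ang m β = β.2 := ang_eq_snd P (hmeq.trans hb_def)
    have h5 : P.ang m α = P.u b a := by
      rw [hmeq, ang_eq_u P (x := b) (b := α) (by rw [← ha_def]; exact hba'), ← ha_def]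
    rw [h4, h5] at h2'
    rw [← h3, hu] at h2'
    exact lt_irrefl _ h2'
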